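/- arXiv:cs/0609002 — 2 statements merged into one kernel-verified Lean document; each statement's English description precedes it below -/
import Mathlib

section
/- If s is an algebraic term and s·σ →β* v, then there exists a substitution σ' such that σ(x) →β* σ'(x) for all x and v →β* s·σ'. -/
namespace CondConf

/-- Untyped lambda-terms with constants from `F`, in de Bruijn notation. -/
inductive Tm (F : Type) : Type
  | const : F → Tm F
  | var   : ℕ → Tm F
  | app   : Tm F → Tm F → Tm F
  | lam   : Tm F → Tm F

namespace Tm

variable {F : Type}

/-- Lift (shift) free de Bruijn indices `≥ d` by one. -/
def lift (d : ℕ) : Tm F → Tm F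
  | const f => const f
  | var n   => if n < d then var n else var (n + 1)
  | app s t => app (lift d s) (lift d t)
  | lam s   => lam (lift (d + 1) s)

/-- Capture-avoiding substitution `t[k := u]` (de Bruijn). -/
def subst : Tm F → ℕ → Tm F → Tm F
  | const f, _, _ => const f
  | var n, k, u   => if n = k then u else if k < n then var (n - 1) else var n
  | app s t, k, u => app (subst s k u) (subst t k u)
  | lam s, k, u   => lam (subst s (k + 1) (lift 0 u))

end Tm

/-- Capture-avoiding application of a substitution `σ` to a term. -/
def applySubst {F : Type} (σ : ℕ → Tm F) : Tm F → Tm F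
  | .const f => .const f
  | .var n   => σ n
  | .app s t => .app (applySubst σ s) (applySubst σ t)
  | .lam s   => .lam (applySubst (fun n => match n with
      | 0 => Tm.var 0
      | m + 1 => Tm.lift 0 (σ m)) s)

/-- One-step beta-reduction. -/
inductive Beta {F : Type} : Tm F → Tm F → Prop
  | beta (s t : Tm F) : Beta (Tm.app (Tm.lam s) t) (Tm.subst s 0 t)
  | appL {s s'} (t) : Beta s s' → Beta (Tm.app s t) (Tm.app s' t)
  | appR (s) {t t'} : Beta t t' → Beta (Tm.app s t) (Tm.app s t')
  | lam {s s'} : Beta s s' → Beta (Tm.lam s) (Tm.lam s')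

/-- Tait–Martin-Löf parallel beta-reduction. -/
inductive PB {F : Type} : Tm F → Tm F → Prop
  | refl (t : Tm F) : PB t t
  | lam {s s'} : PB s s' → PB (Tm.lam s) (Tm.lam s')
  | app {s s' t t'} : PB s s' → PB t t' → PB (Tm.app s t) (Tm.app s' t')
  | beta {s s' t t'} : PB s s' → PB t t' →
      PB (Tm.app (Tm.lam s) t) (Tm.subst s' 0 t')


/-- Algebraic terms: no abstraction and no applied variable. -/
inductive Alg {F : Type} : Tm F → Prop
  | const (f : F) : Alg (Tm.const f)
  | var (n : ℕ) : Alg (Tm.var n)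
  | app {s t} : Alg s → Alg t → (∀ n : ℕ, s ≠ Tm.var n) → Alg (Tm.app s t)

/-!
Because `s` is algebraic, the head `a` of every application in `s` is a constant or an
application, so no instance `a·σ₁` is an abstraction. By induction on `s`, every reduct of `a·σ`
reduces further to such an instance; hence no redex is ever created above the variable
occurrences of `s·σ`, and a reduct of `s·σ` is `s` with each occurrence of a variable `x` replaced
by some reduct of `σ(x)`. The reducts chosen at different occurrences of `x` are joined by
confluence of `→β*`, proved with Tait–Martin-Löf parallel reduction and Takahashi's complete
developments.
-/

namespace Tm
variable {F : Type}

theorem lift_lift (t : Tm F) {d e : ℕ} (h : d ≤ e) :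
    lift d (lift e t) = lift (e + 1) (lift d t) := by
  induction t generalizing d e with
  | const _ => rfl
  | var _ => grind [lift]
  | app s t ihs iht => simp only [lift, ihs h, iht h]
  | lam s ih => simp only [lift, ih (Nat.succ_le_succ h)]

theorem lift_subst_of_le (s : Tm F) {d k : ℕ} (u : Tm F) (h : d ≤ k) :
    lift d (subst s k u) = subst (lift d s) (k + 1) (lift d u) := by
  induction s generalizing d k u with
  | const _ => rfl
  | var _ => grind [lift, subst]
  | app s t ihs iht => simp only [lift, subst, ihs _ h, iht _ h]
  | lam s ih => simp only [lift, subst, ih _ (Nat.succ_le_succ h), lift_lift u (Nat.zero_le d)]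

theorem lift_subst_of_ge (s : Tm F) {d k : ℕ} (u : Tm F) (h : k ≤ d) :
    lift d (subst s k u) = subst (lift (d + 1) s) k (lift d u) := by
  induction s generalizing d k u with
  | const _ => rfl
  | var _ => grind [lift, subst]
  | app s t ihs iht => simp only [lift, subst, ihs _ h, iht _ h]
  | lam s ih => simp only [lift, subst, ih _ (Nat.succ_le_succ h), lift_lift u (Nat.zero_le d)]

theorem subst_lift (t : Tm F) (k : ℕ) (u : Tm F) : subst (lift k t) k u = t := by
  induction t generalizing k u with
  | const _ => rfl
  | var _ => grind [lift, subst]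
  | app s t ihs iht => simp only [lift, subst, ihs, iht]
  | lam s ih => simp only [lift, subst, ih]

theorem subst_subst (s : Tm F) (t u : Tm F) {j k : ℕ} (h : j ≤ k) :
    subst (subst s j t) k u = subst (subst s (k + 1) (lift j u)) j (subst t k u) := by
  induction s generalizing t u j k with
  | const _ => rfl
  | var _ => grind [lift, subst, subst_lift]
  | app a b iha ihb => simp only [subst, iha _ _ h, ihb _ _ h]
  | lam a ih =>
    simp only [subst, ih _ _ (Nat.succ_le_succ h), lift_subst_of_le t _ (Nat.zero_le k),
      lift_lift u (Nat.zero_le j)]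

end Tm

open Tm Relation

local infix:50 " ↠β " => ReflTransGen Beta

variable {F : Type}

section Congruence

variable {s s' t t' : Tm F}

theorem Beta.lift (h : Beta t t') (d : ℕ) : Beta (lift d t) (lift d t') := by
  induction h generalizing d with
  | beta s t => rw [lift_subst_of_ge s t (Nat.zero_le d)]; exact .beta _ _
  | appL t _ ih => exact .appL _ (ih d)
  | appR s _ ih => exact .appR _ (ih d)
  | lam _ ih => exact .lam (ih _)

theorem betaStar_lift (h : t ↠β t') (d : ℕ) : lift d t ↠β lift d t' :=
  ReflTransGen.lift (lift d) (fun _ _ hb => hb.lift d) _ _ h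

theorem betaStar_app (hs : s ↠β s') (ht : t ↠β t') : app s t ↠β app s' t' :=
  (ReflTransGen.lift (app · t) (fun _ _ => .appL t) _ _ hs).trans
    (ReflTransGen.lift (app s') (fun _ _ => .appR s') _ _ ht)

theorem betaStar_lam (h : s ↠β s') : lam s ↠β lam s' :=
  ReflTransGen.lift Tm.lam (fun _ _ => .lam) _ _ h

theorem betaStar_applySubst {σ τ : ℕ → Tm F} (h : ∀ x, σ x ↠β τ x) (s : Tm F) :
    applySubst σ s ↠β applySubst τ s := by
  induction s generalizing σ τ with
  | const _ => rfl
  | var n => exact h n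
  | app a b iha ihb => exact betaStar_app (iha h) (ihb h)
  | lam a ih =>
    refine betaStar_lam (ih fun x => ?_)
    cases x with
    | zero => rfl
    | succ m => exact betaStar_lift (h m) 0

end Congruence

theorem Beta.toPB {t u : Tm F} (h : Beta t u) : PB t u := by
  induction h with
  | beta s t => exact .beta (.refl s) (.refl t)
  | appL t _ ih => exact .app ih (.refl t)
  | appR s _ ih => exact .app (.refl s) ih
  | lam _ ih => exact .lam ih

theorem PB.toBetaStar {t u : Tm F} (h : PB t u) : t ↠β u := by
  induction h with
  | refl t => rfl
  | lam _ ih => exact betaStar_lam ih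
  | app _ _ ihs iht => exact betaStar_app ihs iht
  | beta _ _ ihs iht => exact (betaStar_app (betaStar_lam ihs) iht).tail (.beta _ _)

theorem reflTransGen_PB_eq : ReflTransGen (PB (F := F)) = ReflTransGen Beta :=
  le_antisymm (reflTransGen_closed fun _ _ => PB.toBetaStar)
    (ReflTransGen.mono fun _ _ => Beta.toPB)

theorem PB.lift {t t' : Tm F} (h : PB t t') (d : ℕ) : PB (lift d t) (lift d t') := by
  induction h generalizing d with
  | refl t => exact .refl _
  | lam _ ih => exact .lam (ih _)
  | app _ _ ihs iht => exact .app (ihs d) (iht d)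
  | beta _ _ ihs iht => rw [lift_subst_of_ge _ _ (Nat.zero_le d)]; exact .beta (ihs _) (iht d)

theorem PB.subst_right (s : Tm F) {u u' : Tm F} (h : PB u u') (k : ℕ) :
    PB (subst s k u) (subst s k u') := by
  induction s generalizing u u' k with
  | const f => exact .refl _
  | var n => simp only [subst]; split_ifs <;> first | exact h | exact .refl _
  | app a b iha ihb => exact .app (iha h k) (ihb h k)
  | lam a ih => exact .lam (ih (h.lift 0) _)

theorem PB.subst {s s' u u' : Tm F} (hs : PB s s') (hu : PB u u') (k : ℕ) :
    PB (subst s k u) (subst s' k u') := by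
  induction hs generalizing u u' k with
  | refl t => exact .subst_right t hu k
  | lam _ ih => exact .lam (ih (hu.lift 0) _)
  | app _ _ iha ihb => exact .app (iha hu k) (ihb hu k)
  | beta _ _ iha ihb =>
    rw [Tm.subst, Tm.subst, subst_subst _ _ _ (Nat.zero_le k)]
    exact .beta (iha (hu.lift 0) _) (ihb hu k)

def develop : Tm F → Tm F
  | .lam s => .lam (develop s)
  | .app (.lam s) t => Tm.subst (develop s) 0 (develop t)
  | .app s t => .app (develop s) (develop t)
  | t => t

theorem PB.develop_self : ∀ t : Tm F, PB t (develop t)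
  | .const _ | .var _ => .refl _
  | .lam s => .lam (develop_self s)
  | .app (.lam s) t => .beta (develop_self s) (develop_self t)
  | .app (.const _) t => .app (.refl _) (develop_self t)
  | .app (.var _) t => .app (.refl _) (develop_self t)
  | .app (.app a b) t => .app (develop_self (.app a b)) (develop_self t)

theorem PB.lam_inv {a w : Tm F} (h : PB (Tm.lam a) w) : ∃ a', w = Tm.lam a' ∧ PB a a' := by
  cases h with
  | refl => exact ⟨a, rfl, .refl a⟩
  | lam h => exact ⟨_, rfl, h⟩

/-- Takahashi's triangle property. -/
theorem PB.develop {t u : Tm F} (h : PB t u) : PB u (develop t) := by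
  induction h with
  | refl t => exact .develop_self t
  | lam _ ih => exact .lam ih
  | @app s s' t t' hs ht ihs iht =>
    cases s with
    | lam a =>
      obtain ⟨a', rfl, -⟩ := hs.lam_inv
      obtain ⟨a'', ha'', hpb⟩ := ihs.lam_inv
      cases ha''
      exact .beta hpb iht
    | const | var | app => exact .app ihs iht
  | beta _ _ ihs iht => exact ihs.subst iht 0

theorem betaStar_confluent {a b c : Tm F} (hab : a ↠β b) (hac : a ↠β c) :
    ∃ d, b ↠β d ∧ c ↠β d := by
  rw [← reflTransGen_PB_eq] at hab hac ⊢
  exact church_rosser (fun x _ _ hxy hxz => ⟨develop x, .single hxy.develop, .single hxz.develop⟩)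
    hab hac

theorem const_betaStar_eq {f : F} {v : Tm F} (h : const f ↠β v) : v = const f := by
  induction h with
  | refl => rfl
  | tail _ hstep ih => subst ih; cases hstep

theorem lam_betaStar_inv {a v : Tm F} (h : lam a ↠β v) : ∃ a', v = lam a' := by
  induction h with
  | refl => exact ⟨a, rfl⟩
  | tail _ hstep ih =>
    obtain ⟨a', rfl⟩ := ih
    cases hstep with
    | lam _ => exact ⟨_, rfl⟩

theorem app_betaStar_inv {A B v : Tm F} (hA : ∀ a, A ↠β a → ∀ b, a ≠ lam b)
    (h : app A B ↠β v) : ∃ a b, v = app a b ∧ A ↠β a ∧ B ↠β b := by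
  induction h with
  | refl => exact ⟨A, B, rfl, .refl, .refl⟩
  | tail _ hstep ih =>
    obtain ⟨a, b, rfl, ha, hb⟩ := ih
    cases hstep with
    | beta s t => exact absurd rfl (hA _ ha s)
    | appL t h => exact ⟨_, b, rfl, ha.tail h, hb⟩
    | appR s h => exact ⟨a, _, rfl, ha, hb.tail h⟩

theorem Alg.applySubst_ne_lam {a : Tm F} (ha : Alg a) (hnv : ∀ n, a ≠ Tm.var n)
    (σ : ℕ → Tm F) (c : Tm F) : applySubst σ a ≠ Tm.lam c := by
  cases ha with
  | const | app => simp [applySubst]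
  | var n => exact absurd rfl (hnv n)

/-- if `s` is algebraic and `s·σ →β* v` then `v →β* s·σ'` for some
`σ'` with `σ →β* σ'` pointwise. -/
theorem betaStar_algebraic {F : Type} {s v : Tm F} {σ : ℕ → Tm F}
    (hs : Alg s) (h : Relation.ReflTransGen Beta (applySubst σ s) v) :
    ∃ σ' : ℕ → Tm F, (∀ x : ℕ, Relation.ReflTransGen Beta (σ x) (σ' x)) ∧
      Relation.ReflTransGen Beta v (applySubst σ' s) := by
  induction hs generalizing σ v with
  | const f => exact ⟨σ, fun _ => .refl, by rw [const_betaStar_eq h]; rfl⟩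
  | var n =>
    refine ⟨Function.update σ n v, fun x => ?_, by rw [applySubst, Function.update_self]⟩
    rcases eq_or_ne x n with rfl | hx
    · rwa [Function.update_self]
    · rw [Function.update_of_ne hx]
  | @app a b ha hb hnv iha ihb =>
    have head_rigid : ∀ w, applySubst σ a ↠β w → ∀ c, w ≠ lam c := by
      rintro w hw c rfl
      obtain ⟨σ₁, -, hσ₁a⟩ := iha hw
      obtain ⟨c', hc'⟩ := lam_betaStar_inv hσ₁a
      exact ha.applySubst_ne_lam hnv σ₁ c' hc'
    obtain ⟨x, y, rfl, hx, hy⟩ := app_betaStar_inv head_rigid h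
    obtain ⟨σ₁, hσ₁, hx₁⟩ := iha hx
    obtain ⟨σ₂, hσ₂, hy₂⟩ := ihb hy
    choose σ' h₁ h₂ using fun n => betaStar_confluent (hσ₁ n) (hσ₂ n)
    exact ⟨σ', fun n => (hσ₁ n).trans (h₁ n), betaStar_app
      (hx₁.trans (betaStar_applySubst h₁ a)) (hy₂.trans (betaStar_applySubst h₂ b))⟩

end CondConf
end

section
/- For each level i, the nested parallel conditional rewrite relation ⇒_{A_i} commutes with one-step head beta-reduction →h: if u ←h s ⇒_{A_i} t then there exists v with u ⇒_{A_i} v ←h t. -/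
namespace CondConf

/-- One-step head beta-reduction: contracts the head redex
`λx⃗.(λy.b) a₀ a⃗ →h λx⃗.b[y:=a₀] a⃗`. -/
inductive Head {F : Type} : Tm F → Tm F → Prop
  | beta (s t : Tm F) : Head (Tm.app (Tm.lam s) t) (Tm.subst s 0 t)
  | app {s s'} (t) : Head s s' → (∀ b : Tm F, s ≠ Tm.lam b) →
      Head (Tm.app s t) (Tm.app s' t)
  | lam {s s'} : Head s s' → Head (Tm.lam s) (Tm.lam s')

/-- Head of the application spine. -/
def spineHead {F : Type} : Tm F → Tm F
  | .app s _ => spineHead s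
  | t => t

/-- Arguments of the application spine. -/
def spineArgs {F : Type} : Tm F → List (Tm F)
  | .app s t => spineArgs s ++ [t]
  | _ => []

/-- Strip the outer abstractions `λx⃗`. -/
def stripLam {F : Type} : Tm F → Tm F
  | .lam s => stripLam s
  | t => t

/-- `t'` is obtained from `t` by renaming its (de Bruijn) variables; this
accounts for the fact that the free variables of an argument may be bound in
the surrounding term (e.g. `λx. f x ≻ y` for every variable `y`). -/
def Renaming {F : Type} (t t' : Tm F) : Prop :=
  ∃ ρ : ℕ → ℕ, t' = applySubst (fun n => Tm.var (ρ n)) t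

/-- The relation `≻`: either a head beta-step, or passing (up to renaming of
variables) to one of the arguments `aᵢ` of `s = λx⃗. v a₀ … aₙ` where the head
`v` is a variable or a constant and there is at least one argument. -/
inductive Succ {F : Type} : Tm F → Tm F → Prop
  | head {s t : Tm F} : Head s t → Succ s t
  | arg {s a t : Tm F} :
      ((∃ n : ℕ, spineHead (stripLam s) = Tm.var n) ∨
        (∃ f : F, spineHead (stripLam s) = Tm.const f)) →
      a ∈ spineArgs (stripLam s) →
      1 ≤ (spineArgs (stripLam s)).length →
      Renaming a t → Succ s t

/-- Beta-normal forms. -/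
def BetaNF {F : Type} (t : Tm F) : Prop := ∀ u : Tm F, ¬ Beta t u

/-- Weakly beta-normalizing terms: terms having a beta-normal form. -/
def WN {F : Type} (s : Tm F) : Prop :=
  ∃ t : Tm F, Relation.ReflTransGen Beta s t ∧ BetaNF t

/-- A conditional rewrite rule `d⃗ = c⃗ ⊃ l → r`. -/
structure Rule (F : Type) where
  lhs : Tm F
  rhs : Tm F
  conds : List (Tm F × Tm F)

/-- Joinability for a relation: `a ↓ b` iff `a →* c ←* b` for some `c`. -/
def Joinable {α : Type*} (r : α → α → Prop) (a b : α) : Prop :=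
  ∃ c : α, Relation.ReflTransGen r a c ∧ Relation.ReflTransGen r b c

/-- Closure of a relation under the term formation rules (contexts). -/
inductive Ctx {F : Type} (base : Tm F → Tm F → Prop) : Tm F → Tm F → Prop
  | base {s t} : base s t → Ctx base s t
  | appL {s s'} (t) : Ctx base s s' → Ctx base (Tm.app s t) (Tm.app s' t)
  | appR (s) {t t'} : Ctx base t t' → Ctx base (Tm.app s t) (Tm.app s t')
  | lam {s s'} : Ctx base s s' → Ctx base (Tm.lam s) (Tm.lam s')

/-- Root rewrite steps: rule instances whose instantiated conditions are
joinable for the relation `prev`. -/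
def Aroot {F : Type} (R : Set (Rule F)) (prev : Tm F → Tm F → Prop)
    (s t : Tm F) : Prop :=
  ∃ ru ∈ R, ∃ σ : ℕ → Tm F,
    s = applySubst σ ru.lhs ∧ t = applySubst σ ru.rhs ∧
    ∀ dc ∈ ru.conds, Joinable prev (applySubst σ dc.1) (applySubst σ dc.2)

/-- The level-`i` standard conditional rewrite relation `→_{A_i}`
(`→_{A_0} = ∅`, conditions at level `i+1` checked by `→_{A_i}`-joinability). -/
def Alevel {F : Type} (R : Set (Rule F)) : ℕ → Tm F → Tm F → Prop
  | 0 => fun _ _ => False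
  | i + 1 => Ctx (Aroot R (Alevel R i))

/-- The nested parallel conditional rewrite relation `⇒_{A_i}`: smallest
reflexive parallel relation closed under abstraction, parallel application and
the rule `lσ ⇒_{A_i} rτ` whenever `lσ →_{A_i} rσ` and `σ ⇒_{A_i} τ`. -/
inductive APar {F : Type} (R : Set (Rule F)) (i : ℕ) : Tm F → Tm F → Prop
  | refl (t : Tm F) : APar R i t t
  | app {s s' t t'} : APar R i s s' → APar R i t t' →
      APar R i (Tm.app s t) (Tm.app s' t')
  | lam {s s'} : APar R i s s' → APar R i (Tm.lam s) (Tm.lam s')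
  | rule {ru : Rule F} {σ τ : ℕ → Tm F} : ru ∈ R →
      Alevel R i (applySubst σ ru.lhs) (applySubst σ ru.rhs) →
      (∀ n : ℕ, APar R i (σ n) (τ n)) →
      APar R i (applySubst σ ru.lhs) (applySubst τ ru.rhs)

/-! Instances of rule left-hand sides are algebraic terms headed by a constant, so they are
neither abstractions nor head-reducible. Hence a `⇒_{A_i}`-step out of a head-reducible term
fires no rule at the root and acts componentwise, and the head step can be replayed on its
target; at the contracted redex, `(λa) b ⇒ (λa') b'` gives `a[b] ⇒ a'[b']` by substitutivity.
Substitutivity in turn rests on `→_{A_i}` being closed under substitution at every level,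
because instances of rule instances are rule instances with instantiated conditions. -/

section Substitution

variable {F : Type}

def upSubst (σ : ℕ → Tm F) : ℕ → Tm F
  | 0 => Tm.var 0
  | m + 1 => Tm.lift 0 (σ m)

def ofRen (ρ : ℕ → ℕ) : ℕ → Tm F := fun n => Tm.var (ρ n)

def upRen (ρ : ℕ → ℕ) : ℕ → ℕ
  | 0 => 0
  | m + 1 => ρ m + 1

def substAt (k : ℕ) (u : Tm F) : ℕ → Tm F := fun n =>
  if n = k then u else if k < n then Tm.var (n - 1) else Tm.var n

@[simp]
theorem applySubst_lam (σ : ℕ → Tm F) (s : Tm F) :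
    applySubst σ (.lam s) = .lam (applySubst (upSubst σ) s) := rfl

theorem upSubst_ofRen (ρ : ℕ → ℕ) :
    upSubst (ofRen ρ : ℕ → Tm F) = ofRen (upRen ρ) := by
  funext n
  cases n <;> simp [upSubst, ofRen, upRen, Tm.lift]

theorem lift_eq_applySubst (d : ℕ) (t : Tm F) :
    Tm.lift d t = applySubst (ofRen fun n => if n < d then n else n + 1) t := by
  induction t generalizing d with
  | const f => rfl
  | var n => simp only [Tm.lift, applySubst, ofRen]; split <;> rfl
  | app s t ihs iht => simp [Tm.lift, applySubst, ihs, iht]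
  | lam s ih =>
      simp only [Tm.lift, applySubst_lam, upSubst_ofRen, ih]
      congr 3
      funext n
      cases n <;> simp only [upRen] <;> split_ifs <;> omega

theorem applySubst_applySubst_ofRen (σ : ℕ → Tm F) (ρ : ℕ → ℕ) (t : Tm F) :
    applySubst σ (applySubst (ofRen ρ) t) = applySubst (σ ∘ ρ) t := by
  induction t generalizing σ ρ with
  | const f => rfl
  | var n => rfl
  | app s t ihs iht => simp [applySubst, ihs, iht]
  | lam s ih =>
      simp only [applySubst_lam, upSubst_ofRen, ih]
      congr 2
      funext n
      cases n <;> rfl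

theorem applySubst_ofRen_upRen_lift (ρ : ℕ → ℕ) (x : Tm F) :
    applySubst (ofRen (upRen ρ)) (Tm.lift 0 x) = Tm.lift 0 (applySubst (ofRen ρ) x) := by
  simp only [lift_eq_applySubst, applySubst_applySubst_ofRen]
  rfl

theorem applySubst_ofRen_applySubst (ρ : ℕ → ℕ) (σ : ℕ → Tm F) (t : Tm F) :
    applySubst (ofRen ρ) (applySubst σ t) =
      applySubst (fun n => applySubst (ofRen ρ) (σ n)) t := by
  induction t generalizing ρ σ with
  | const f => rfl
  | var n => rfl
  | app s t ihs iht => simp [applySubst, ihs, iht]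
  | lam s ih =>
      simp only [applySubst_lam, upSubst_ofRen, ih]
      congr 2
      funext n
      cases n with
      | zero => rfl
      | succ m => exact applySubst_ofRen_upRen_lift ρ (σ m)

theorem applySubst_upSubst_lift (θ : ℕ → Tm F) (x : Tm F) :
    applySubst (upSubst θ) (Tm.lift 0 x) = Tm.lift 0 (applySubst θ x) := by
  rw [lift_eq_applySubst, applySubst_applySubst_ofRen, lift_eq_applySubst,
    applySubst_ofRen_applySubst]
  congr 1
  funext n
  simp [upSubst, lift_eq_applySubst]

theorem applySubst_applySubst (θ σ : ℕ → Tm F) (t : Tm F) :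
    applySubst θ (applySubst σ t) = applySubst (fun n => applySubst θ (σ n)) t := by
  induction t generalizing θ σ with
  | const f => rfl
  | var n => rfl
  | app s t ihs iht => simp [applySubst, ihs, iht]
  | lam s ih =>
      simp only [applySubst_lam, ih]
      congr 2
      funext n
      cases n with
      | zero => rfl
      | succ m => exact applySubst_upSubst_lift θ (σ m)

theorem subst_eq_applySubst (t : Tm F) (k : ℕ) (u : Tm F) :
    Tm.subst t k u = applySubst (substAt k u) t := by
  induction t generalizing k u with
  | const f => rfl
  | var n => rfl
  | app s t ihs iht => simp [Tm.subst, applySubst, ihs, iht]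
  | lam s ih =>
      simp only [Tm.subst, applySubst_lam, ih]
      congr 2
      funext n
      cases n with
      | zero => simp [substAt, upSubst]
      | succ m =>
          simp only [substAt, upSubst]
          split_ifs <;> first | rfl | omega | (simp [Tm.lift]; omega)

end Substitution

section SubstClosed

variable {F : Type}

def SubstClosed (r : Tm F → Tm F → Prop) : Prop :=
  ∀ (θ : ℕ → Tm F) {s t : Tm F}, r s t → r (applySubst θ s) (applySubst θ t)

theorem Joinable.map {α β : Type*} {r : α → α → Prop} {p : β → β → Prop}
    (f : α → β) (hf : ∀ a b, r a b → p (f a) (f b)) {a b : α} (h : Joinable r a b) :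
    Joinable p (f a) (f b) :=
  let ⟨c, hac, hbc⟩ := h
  ⟨f c, hac.lift f hf, hbc.lift f hf⟩

theorem Ctx.substClosed {base : Tm F → Tm F → Prop} (h : SubstClosed base) :
    SubstClosed (Ctx base) := by
  intro θ s t hst
  induction hst generalizing θ with
  | base hb => exact .base (h θ hb)
  | appL _ _ ih => exact .appL _ (ih θ)
  | appR _ _ ih => exact .appR _ (ih θ)
  | lam _ ih => exact .lam (ih (upSubst θ))

theorem Aroot.substClosed (R : Set (Rule F)) {prev : Tm F → Tm F → Prop}
    (h : SubstClosed prev) : SubstClosed (Aroot R prev) := by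
  rintro θ s t ⟨ru, hru, σ, rfl, rfl, hconds⟩
  refine ⟨ru, hru, fun n => applySubst θ (σ n), applySubst_applySubst ..,
    applySubst_applySubst .., fun dc hdc => ?_⟩
  simpa only [applySubst_applySubst] using
    (hconds dc hdc).map (applySubst θ) fun _ _ => h θ

theorem Alevel.substClosed (R : Set (Rule F)) : ∀ i, SubstClosed (Alevel R i)
  | 0 => fun _ _ _ h => h.elim
  | i + 1 => Ctx.substClosed (Aroot.substClosed R (Alevel.substClosed R i))

end SubstClosed

section Substitutivity

variable {F : Type} {R : Set (Rule F)} {i : ℕ}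

theorem aPar_rule_applySubst {ru : Rule F} {σ τ : ℕ → Tm F} (hru : ru ∈ R)
    (hA : Alevel R i (applySubst σ ru.lhs) (applySubst σ ru.rhs)) {θ θ' : ℕ → Tm F}
    (h : ∀ n, APar R i (applySubst θ (σ n)) (applySubst θ' (τ n))) :
    APar R i (applySubst θ (applySubst σ ru.lhs)) (applySubst θ' (applySubst τ ru.rhs)) := by
  have hA' := Alevel.substClosed R i θ hA
  rw [applySubst_applySubst, applySubst_applySubst] at hA' ⊢
  exact .rule hru hA' h

theorem aPar_applySubst_ofRen {s t : Tm F} (h : APar R i s t) (ρ : ℕ → ℕ) :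
    APar R i (applySubst (ofRen ρ) s) (applySubst (ofRen ρ) t) := by
  induction h generalizing ρ with
  | refl t => exact .refl _
  | app _ _ ih₁ ih₂ => exact .app (ih₁ ρ) (ih₂ ρ)
  | lam _ ih => simpa only [applySubst_lam, upSubst_ofRen] using .lam (ih (upRen ρ))
  | rule hru hA _ ih => exact aPar_rule_applySubst hru hA fun n => ih n ρ

theorem aPar_upSubst {θ θ' : ℕ → Tm F} (h : ∀ n, APar R i (θ n) (θ' n)) :
    ∀ n, APar R i (upSubst θ n) (upSubst θ' n)
  | 0 => .refl _
  | m + 1 => by simpa only [upSubst, lift_eq_applySubst] using aPar_applySubst_ofRen (h m) _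

theorem aPar_applySubst_refl (t : Tm F) {θ θ' : ℕ → Tm F}
    (h : ∀ n, APar R i (θ n) (θ' n)) :
    APar R i (applySubst θ t) (applySubst θ' t) := by
  induction t generalizing θ θ' with
  | const f => exact .refl _
  | var n => exact h n
  | app _ _ ihs iht => exact .app (ihs h) (iht h)
  | lam _ ih => exact .lam (ih (aPar_upSubst h))

theorem aPar_applySubst {s s' : Tm F} (hs : APar R i s s') {θ θ' : ℕ → Tm F}
    (h : ∀ n, APar R i (θ n) (θ' n)) : APar R i (applySubst θ s) (applySubst θ' s') := by
  induction hs generalizing θ θ' with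
  | refl t => exact aPar_applySubst_refl t h
  | app _ _ ih₁ ih₂ => exact .app (ih₁ h) (ih₂ h)
  | lam _ ih => exact .lam (ih (aPar_upSubst h))
  | rule hru hA _ ih => exact aPar_rule_applySubst hru hA fun n => ih n h

theorem aPar_subst {s s' a a' : Tm F} (hs : APar R i s s') (ha : APar R i a a') :
    APar R i (Tm.subst s 0 a) (Tm.subst s' 0 a') := by
  rw [subst_eq_applySubst, subst_eq_applySubst]
  refine aPar_applySubst hs fun n => ?_
  cases n with
  | zero => simpa [substAt] using ha
  | succ m => simpa [substAt] using .refl _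

end Substitutivity

section HeadSteps

variable {F : Type} {R : Set (Rule F)} {i : ℕ}

theorem Alg.applySubst_ne_lam_s11 {l : Tm F} (hl : Alg l) (hv : ∀ n, l ≠ .var n)
    (σ : ℕ → Tm F) (b : Tm F) : applySubst σ l ≠ .lam b := by
  cases hl with
  | const f => simp [applySubst]
  | var n => exact absurd rfl (hv n)
  | app => simp [applySubst]

theorem Alg.not_head_applySubst {l : Tm F} (hl : Alg l) (hv : ∀ n, l ≠ .var n)
    (σ : ℕ → Tm F) (w : Tm F) : ¬ Head (applySubst σ l) w := by
  induction hl generalizing w with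
  | const f => rintro ⟨⟩
  | var n => exact absurd rfl (hv n)
  | @app s t hs _ hnv ihs _ =>
      intro h
      change Head (.app (applySubst σ s) (applySubst σ t)) w at h
      generalize hP : applySubst σ s = P at h
      cases h with
      | beta b _ => exact hs.applySubst_ne_lam_s11 hnv σ b hP
      | app _ hh _ => exact ihs hnv _ (hP ▸ hh)

theorem aPar_lam_inv
    (hR : ∀ ru ∈ R, Alg ru.lhs ∧ ∀ n : ℕ, ru.lhs ≠ Tm.var n) {s t : Tm F}
    (h : APar R i (.lam s) t) :
    ∃ s', t = .lam s' ∧ APar R i s s' := by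
  generalize hq : Tm.lam s = q at h
  cases h with
  | refl => exact ⟨s, hq ▸ rfl, .refl s⟩
  | app => cases hq
  | lam h => cases hq; exact ⟨_, rfl, h⟩
  | rule hru => exact absurd hq.symm ((hR _ hru).1.applySubst_ne_lam_s11 (hR _ hru).2 _ _)

theorem aPar_app_inv
    (hR : ∀ ru ∈ R, Alg ru.lhs ∧ ∀ n : ℕ, ru.lhs ≠ Tm.var n) {a b t w : Tm F}
    (hh : Head (.app a b) w) (h : APar R i (.app a b) t) :
    ∃ a' b', t = .app a' b' ∧ APar R i a a' ∧ APar R i b b' := by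
  generalize hq : Tm.app a b = q at h
  cases h with
  | refl => exact ⟨a, b, hq ▸ rfl, .refl a, .refl b⟩
  | app ha hb => cases hq; exact ⟨_, _, rfl, ha, hb⟩
  | lam => cases hq
  | rule hru => exact absurd (hq ▸ hh) ((hR _ hru).1.not_head_applySubst (hR _ hru).2 _ _)

theorem aPar_ne_lam_of_head
    (hR : ∀ ru ∈ R, Alg ru.lhs ∧ ∀ n : ℕ, ru.lhs ≠ Tm.var n) {a a' w : Tm F}
    (h : APar R i a a') (hh : Head a w) (hnl : ∀ b, a ≠ .lam b) : ∀ b, a' ≠ .lam b := by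
  cases h with
  | refl => exact hnl
  | app => intro _ hb; cases hb
  | lam => exact absurd rfl (hnl _)
  | rule hru => exact absurd hh ((hR _ hru).1.not_head_applySubst (hR _ hru).2 _ _)

end HeadSteps

/-- `⇒_{A_i}` commutes with one-step head beta-reduction:
if `u ←h s ⇒_{A_i} t` then `u ⇒_{A_i} v ←h t` for some `v`. -/
theorem aPar_commutes_head {F : Type} (R : Set (Rule F))
    (hR : ∀ ru ∈ R, Alg ru.lhs ∧ ∀ n : ℕ, ru.lhs ≠ Tm.var n)
    (i : ℕ) {s t u : Tm F} (hh : Head s u) (hp : APar R i s t) :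
    ∃ v : Tm F, APar R i u v ∧ Head t v := by
  induction hh generalizing t with
  | beta a b =>
      obtain ⟨a', b', rfl, ha, hb⟩ := aPar_app_inv hR (.beta a b) hp
      obtain ⟨a'', rfl, ha'⟩ := aPar_lam_inv hR ha
      exact ⟨_, aPar_subst ha' hb, .beta _ _⟩
  | app b ha hnl ih =>
      obtain ⟨a', b', rfl, ha', hb⟩ := aPar_app_inv hR (.app b ha hnl) hp
      obtain ⟨v, hv, hhv⟩ := ih ha'
      exact ⟨_, .app hv hb, .app _ hhv (aPar_ne_lam_of_head hR ha' ha hnl)⟩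
  | lam _ ih =>
      obtain ⟨a', rfl, ha'⟩ := aPar_lam_inv hR hp
      obtain ⟨v, hv, hhv⟩ := ih ha'
      exact ⟨_, .lam hv, .lam hhv⟩

end CondConf
end
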